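/- arXiv:math/0207134 — 3 statements merged into one kernel-verified Lean document; each statement's English description precedes it below -/
import Mathlib

section
/- For every T̂ ∈ D₀ with lift T̃, the vertical rotation set ρ_V(T)* is a nonempty compact interval of ℝ containing 0; that is, ρ_V(T)* = [ρ_V^min, ρ_V^max] with ρ_V^min ≤ 0 ≤ ρ_V^max. -/
open Filter Topology

noncomputable section

/-- The cylinder (ℝ/ℤ) × ℝ. -/
abbrev Cyl : Type := AddCircle (1:ℝ) × ℝ

/-- Projection π₁ : ℝ² → (ℝ/ℤ)×ℝ, (x,y) ↦ (x mod 1, y). -/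
def projCyl (Z : ℝ × ℝ) : Cyl := ((Z.1 : AddCircle (1:ℝ)), Z.2)

/-- The lift T̃(x,y) = (x + y + g(x), y + g(x)). -/
def liftMap (g : ℝ → ℝ) (Z : ℝ × ℝ) : ℝ × ℝ := (Z.1 + Z.2 + g Z.1, Z.2 + g Z.1)

/-- The vertical rotation set: all limits of convergent sequences
    (p₂(T̃^{nᵢ}(Zᵢ)) − p₂(Zᵢ))/nᵢ with nᵢ → ∞. -/
def vRotSet (T : ℝ × ℝ → ℝ × ℝ) : Set ℝ :=
  {ω | ∃ (Z : ℕ → ℝ × ℝ) (n : ℕ → ℕ), Tendsto n atTop atTop ∧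
    Tendsto (fun i => ((T^[n i] (Z i)).2 - (Z i).2) / (n i : ℝ)) atTop (𝓝 ω)}

/-- ρ_V^max -/
def rhoVMax (T : ℝ × ℝ → ℝ × ℝ) : ℝ := sSup (vRotSet T)

/-- ρ_V^min -/
def rhoVMin (T : ℝ × ℝ → ℝ × ℝ) : ℝ := sInf (vRotSet T)

/-- A representative in [0,1) of a point of ℝ/ℤ. -/
def rep (x : AddCircle (1:ℝ)) : ℝ := (AddCircle.equivIco 1 0 x : ℝ)

/-- The cylinder map induced by the lift (x,y) ↦ (x+y+g(x), y+g(x)) for 1-periodic g. -/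
def inducedMap (g : ℝ → ℝ) (z : Cyl) : Cyl :=
  (z.1 + ((z.2 + g (rep z.1) : ℝ) : AddCircle (1:ℝ)), z.2 + g (rep z.1))

/-- A rotational invariant curve of a cylinder homeomorphism `S`: the image Γ of a
continuous injective map γ : ℝ/ℤ → (ℝ/ℤ)×ℝ such that p₁∘γ has degree one
(expressed via a continuous lift γt with γt(t+1) = γt(t)+(1,0)) and S(Γ) = Γ. -/
def IsRIC (S : Cyl → Cyl) (Γ : Set Cyl) : Prop :=
  ∃ γ : AddCircle (1:ℝ) → Cyl,
    Continuous γ ∧ Function.Injective γ ∧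
    (∃ γt : ℝ → ℝ × ℝ, Continuous γt ∧ (∀ t, γt (t + 1) = γt t + (1, 0)) ∧
      ∀ t : ℝ, γ (t : AddCircle (1:ℝ)) = projCyl (γt t)) ∧
    Γ = Set.range γ ∧ S '' Γ = Γ

/-- K(s,q) = π₁(K̃(s,q)) where K̃(s,q) = {(x,y) : p₁(T̃^q(x,y)) = x + s}. -/
def Kset (g : ℝ → ℝ) (s : ℤ) (q : ℕ) : Set Cyl :=
  projCyl '' {Z : ℝ × ℝ | ((liftMap g)^[q] Z).1 = Z.1 + s}

def muMinus (g : ℝ → ℝ) (s : ℤ) (q : ℕ) (x : AddCircle (1:ℝ)) : ℝ :=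
  sInf {y : ℝ | (x, y) ∈ Kset g s q}

def muPlus (g : ℝ → ℝ) (s : ℤ) (q : ℕ) (x : AddCircle (1:ℝ)) : ℝ :=
  sSup {y : ℝ | (x, y) ∈ Kset g s q}

def nuMinus (g : ℝ → ℝ) (s : ℤ) (q : ℕ) (x : AddCircle (1:ℝ)) : ℝ :=
  sInf {y : ℝ | (x, y) ∈ (inducedMap g)^[q] '' Kset g s q}

def nuPlus (g : ℝ → ℝ) (s : ℤ) (q : ℕ) (x : AddCircle (1:ℝ)) : ℝ :=
  sSup {y : ℝ | (x, y) ∈ (inducedMap g)^[q] '' Kset g s q}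

/-- C separates the cylinder: the far upper and lower halves lie in two different
connected components of the complement. -/
def SeparatesCyl (C : Set Cyl) : Prop :=
  ∃ M : ℝ, 0 < M ∧ ∃ A ∈ Cᶜ, ∃ B ∈ Cᶜ,
    {z : Cyl | M ≤ z.2} ⊆ connectedComponentIn Cᶜ A ∧
    {z : Cyl | z.2 ≤ -M} ⊆ connectedComponentIn Cᶜ B ∧
    connectedComponentIn Cᶜ A ≠ connectedComponentIn Cᶜ B

/-- The torus T² = (ℝ/ℤ)². -/
abbrev Torus : Type := AddCircle (1:ℝ) × AddCircle (1:ℝ)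

def projTorus (Z : ℝ × ℝ) : Torus := ((Z.1 : AddCircle (1:ℝ)), (Z.2 : AddCircle (1:ℝ)))

/-- The torus map induced by the lift for 1-periodic g. -/
def torusMapOf (g : ℝ → ℝ) (z : Torus) : Torus :=
  (z.1 + z.2 + ((g (rep z.1) : ℝ) : AddCircle (1:ℝ)), z.2 + ((g (rep z.1) : ℝ) : AddCircle (1:ℝ)))



/-!
The vertical displacement of `liftMap g` after `n` steps is the Birkhoff sum `Sₙ` of
`z ↦ g z.1` over the induced torus map, which preserves Haar measure. The maxima of `Sₙ` are
subadditive and the minima superadditive, so by Fekete's lemma they grow at linear rates `b` and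
`a`; every limit of `Sₙ / n` lies in `[a, b]`, and conversely, the torus being connected, `n ω` is a
value of `Sₙ` for every `ω ∈ [a, b]`. Invariance of the measure gives `∫ Sₙ = n ∫ g = 0`, so
`0 ∈ [a, b]`.
-/

open MeasureTheory Set

section BirkhoffLimitSet

variable {X : Type*} {f : X → X} {φ : X → ℝ}

def birkhoffLimitSet (f : X → X) (φ : X → ℝ) : Set ℝ :=
  {ω | ∃ (x : ℕ → X) (n : ℕ → ℕ), Tendsto n atTop atTop ∧
    Tendsto (fun i => birkhoffSum f φ (n i) (x i) / n i) atTop (𝓝 ω)}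

def birkhoffSumMax (f : X → X) (φ : X → ℝ) (n : ℕ) : ℝ := ⨆ x, birkhoffSum f φ n x

def birkhoffSumMin (f : X → X) (φ : X → ℝ) (n : ℕ) : ℝ := ⨅ x, birkhoffSum f φ n x

theorem mem_birkhoffLimitSet_of_mem_range {ω : ℝ}
    (h : ∀ n : ℕ, n ≠ 0 → n * ω ∈ range (birkhoffSum f φ n)) :
    ω ∈ birkhoffLimitSet f φ := by
  obtain ⟨x₀, -⟩ := h 1 one_ne_zero
  have hx (n : ℕ) : ∃ x, n ≠ 0 → birkhoffSum f φ n x = n * ω := by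
    by_cases hn : n = 0
    · exact ⟨x₀, (absurd hn ·)⟩
    · obtain ⟨x, hx⟩ := h n hn
      exact ⟨x, fun _ => hx⟩
  choose x hx using hx
  refine ⟨x, id, tendsto_id, tendsto_const_nhds.congr' ?_⟩
  filter_upwards [eventually_ne_atTop 0] with n hn
  rw [id, hx n hn, mul_div_cancel_left₀ _ (Nat.cast_ne_zero.2 hn)]

theorem bddBelow_range_div_natCast {u : ℕ → ℝ} {c : ℝ} (h : ∀ n : ℕ, n * c ≤ u n) :
    BddBelow (range fun n : ℕ => u n / n) := by
  refine ⟨min c 0, ?_⟩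
  rintro _ ⟨n, rfl⟩
  rcases n.eq_zero_or_pos with rfl | hn
  · simp
  · rw [le_div_iff₀ (by exact_mod_cast hn), mul_comm]
    exact (mul_le_mul_of_nonneg_left (min_le_left c 0) n.cast_nonneg).trans (h n)

variable [TopologicalSpace X]

theorem continuous_birkhoffSum (hf : Continuous f) (hφ : Continuous φ) (n : ℕ) :
    Continuous (birkhoffSum f φ n) :=
  continuous_finsetSum _ fun k _ => hφ.comp (hf.iterate k)

variable [CompactSpace X]

theorem birkhoffSum_le_birkhoffSumMax (hf : Continuous f) (hφ : Continuous φ) (n : ℕ) (x : X) :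
    birkhoffSum f φ n x ≤ birkhoffSumMax f φ n :=
  le_ciSup (isCompact_range (continuous_birkhoffSum hf hφ n)).bddAbove x

theorem birkhoffSumMin_le_birkhoffSum (hf : Continuous f) (hφ : Continuous φ) (n : ℕ) (x : X) :
    birkhoffSumMin f φ n ≤ birkhoffSum f φ n x :=
  ciInf_le (isCompact_range (continuous_birkhoffSum hf hφ n)).bddBelow x

variable [Nonempty X]

theorem Icc_birkhoffSumMin_birkhoffSumMax_subset_range [PreconnectedSpace X]
    (hf : Continuous f) (hφ : Continuous φ) (n : ℕ) :
    Icc (birkhoffSumMin f φ n) (birkhoffSumMax f φ n) ⊆ range (birkhoffSum f φ n) :=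
  have hc := continuous_birkhoffSum hf hφ n
  (isPreconnected_range hc).Icc_subset ((isCompact_range hc).sInf_mem (range_nonempty _))
    ((isCompact_range hc).sSup_mem (range_nonempty _))

theorem subadditive_birkhoffSumMax (hf : Continuous f) (hφ : Continuous φ) :
    Subadditive (birkhoffSumMax f φ) := fun m n =>
  ciSup_le fun x => (birkhoffSum_add f φ m n x).trans_le <|
    add_le_add (birkhoffSum_le_birkhoffSumMax hf hφ m x) (birkhoffSum_le_birkhoffSumMax hf hφ n _)

theorem subadditive_neg_birkhoffSumMin (hf : Continuous f) (hφ : Continuous φ) :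
    Subadditive (fun n => -birkhoffSumMin f φ n) := fun m n => by
  rw [← neg_add, neg_le_neg_iff]
  exact le_ciInf fun x => (birkhoffSum_add f φ m n x).ge.trans' <|
    add_le_add (birkhoffSumMin_le_birkhoffSum hf hφ m x) (birkhoffSumMin_le_birkhoffSum hf hφ n _)

theorem bddBelow_birkhoffSumMax_div (hf : Continuous f) (hφ : Continuous φ) :
    BddBelow (range fun n : ℕ => birkhoffSumMax f φ n / n) := by
  obtain ⟨c, hc⟩ := (isCompact_range hφ).bddBelow
  obtain ⟨x⟩ := ‹Nonempty X›
  refine bddBelow_range_div_natCast (c := c) fun n => ?_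
  refine le_trans ?_ (birkhoffSum_le_birkhoffSumMax hf hφ n x)
  simpa [birkhoffSum] using
    Finset.card_nsmul_le_sum (Finset.range n) _ c fun k _ => hc (mem_range_self _)

theorem bddBelow_neg_birkhoffSumMin_div (hf : Continuous f) (hφ : Continuous φ) :
    BddBelow (range fun n : ℕ => -birkhoffSumMin f φ n / n) := by
  obtain ⟨c, hc⟩ := (isCompact_range hφ).bddAbove
  obtain ⟨x⟩ := ‹Nonempty X›
  refine bddBelow_range_div_natCast (c := -c) fun n => ?_
  rw [mul_neg, neg_le_neg_iff]
  refine le_trans (birkhoffSumMin_le_birkhoffSum hf hφ n x) ?_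
  simpa [birkhoffSum] using
    Finset.sum_le_card_nsmul (Finset.range n) _ c fun k _ => hc (mem_range_self _)

theorem birkhoffLimitSet_subset_Icc (hf : Continuous f) (hφ : Continuous φ) :
    birkhoffLimitSet f φ ⊆ Icc (-(subadditive_neg_birkhoffSumMin hf hφ).lim)
      (subadditive_birkhoffSumMax hf hφ).lim := by
  rintro ω ⟨x, n, hn, hω⟩
  have hmin := ((subadditive_neg_birkhoffSumMin hf hφ).tendsto_lim
    (bddBelow_neg_birkhoffSumMin_div hf hφ)).comp hn
  have hmax := ((subadditive_birkhoffSumMax hf hφ).tendsto_lim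
    (bddBelow_birkhoffSumMax_div hf hφ)).comp hn
  constructor
  · rw [neg_le]
    refine le_of_tendsto_of_tendsto hω.neg hmin (.of_forall fun i => ?_)
    simp only [Function.comp_apply, ← neg_div]
    exact div_le_div_of_nonneg_right (neg_le_neg (birkhoffSumMin_le_birkhoffSum hf hφ _ _))
      (Nat.cast_nonneg _)
  · exact le_of_tendsto_of_tendsto hω hmax (.of_forall fun i =>
      div_le_div_of_nonneg_right (birkhoffSum_le_birkhoffSumMax hf hφ _ _) (Nat.cast_nonneg _))

theorem Icc_subset_birkhoffLimitSet [PreconnectedSpace X] (hf : Continuous f)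
    (hφ : Continuous φ) :
    Icc (-(subadditive_neg_birkhoffSumMin hf hφ).lim) (subadditive_birkhoffSumMax hf hφ).lim ⊆
      birkhoffLimitSet f φ := by
  rintro ω ⟨hmin, hmax⟩
  refine mem_birkhoffLimitSet_of_mem_range fun n hn =>
    Icc_birkhoffSumMin_birkhoffSumMax_subset_range hf hφ n ⟨?_, ?_⟩
  · have := (subadditive_neg_birkhoffSumMin hf hφ).lim_le_div
      (bddBelow_neg_birkhoffSumMin_div hf hφ) hn
    rw [neg_div, le_neg] at this
    rw [← div_le_iff₀' (by positivity)]
    exact this.trans hmin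
  · rw [← le_div_iff₀' (by positivity)]
    exact hmax.trans ((subadditive_birkhoffSumMax hf hφ).lim_le_div
      (bddBelow_birkhoffSumMax_div hf hφ) hn)

theorem exists_birkhoffLimitSet_eq_Icc [PreconnectedSpace X] (hf : Continuous f)
    (hφ : Continuous φ) : ∃ a b, birkhoffLimitSet f φ = Icc a b :=
  ⟨_, _, (birkhoffLimitSet_subset_Icc hf hφ).antisymm (Icc_subset_birkhoffLimitSet hf hφ)⟩

end BirkhoffLimitSet

section Integral

variable {X : Type*} [MeasurableSpace X] {f : X → X} {φ : X → ℝ} {μ : Measure X}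

theorem MeasureTheory.MeasurePreserving.integral_birkhoffSum (hf : MeasurePreserving f μ μ)
    (hφ : Integrable φ μ) (n : ℕ) :
    ∫ x, birkhoffSum f φ n x ∂μ = n * ∫ x, φ x ∂μ := by
  have hk (k : ℕ) : ∫ x, φ (f^[k] x) ∂μ = ∫ x, φ x ∂μ := by
    have hfk := hf.iterate k
    rw [← integral_map hfk.measurable.aemeasurable (by rw [hfk.map_eq]; exact hφ.aestronglyMeasurable),
      hfk.map_eq]
  have hint (k : ℕ) : Integrable (fun x => φ (f^[k] x)) μ :=
    ((hf.iterate k).integrable_comp hφ.aestronglyMeasurable).2 hφ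
  simp only [birkhoffSum, integral_finsetSum _ fun k _ => hint k, hk, Finset.sum_const,
    Finset.card_range, nsmul_eq_mul]

variable [TopologicalSpace X] [OpensMeasurableSpace X] [CompactSpace X] [PreconnectedSpace X]

theorem integral_mem_birkhoffLimitSet [IsProbabilityMeasure μ] (hf : Continuous f)
    (hφ : Continuous φ) (hμ : MeasurePreserving f μ μ) :
    ∫ x, φ x ∂μ ∈ birkhoffLimitSet f φ := by
  have := nonempty_of_isProbabilityMeasure μ
  have hint {u : X → ℝ} (hu : Continuous u) : Integrable u μ :=
    hu.integrable_of_hasCompactSupport (.of_compactSpace u)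
  have hS := continuous_birkhoffSum hf hφ
  refine mem_birkhoffLimitSet_of_mem_range fun n _ =>
    Icc_birkhoffSumMin_birkhoffSumMax_subset_range hf hφ n ⟨?_, ?_⟩
  all_goals rw [← hμ.integral_birkhoffSum (hint hφ)]
  · simpa using integral_mono (integrable_const _) (hint (hS n))
      (birkhoffSumMin_le_birkhoffSum hf hφ n)
  · simpa using integral_mono (hint (hS n)) (integrable_const _)
      (birkhoffSum_le_birkhoffSumMax hf hφ n)

end Integral

instance : IsProbabilityMeasure (volume : Measure (AddCircle (1 : ℝ))) :=
  ⟨by rw [AddCircle.measure_univ, ENNReal.ofReal_one]⟩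

instance : IsProbabilityMeasure (volume : Measure Torus) := by
  rw [Measure.volume_eq_prod]
  infer_instance

theorem measurable_rep : Measurable rep :=
  measurable_subtype_coe.comp (AddCircle.measurableEquivIco 1 0).measurable

theorem projTorus_rep (z : Torus) : projTorus (rep z.1, rep z.2) = z :=
  Prod.ext ((AddCircle.equivIco 1 0).symm_apply_apply z.1)
    ((AddCircle.equivIco 1 0).symm_apply_apply z.2)

section Periodic

variable {g : ℝ → ℝ}

theorem Function.Periodic.apply_rep (hg : Function.Periodic g 1) (x : ℝ) : g (rep x) = g x := by
  have h := AddCircle.coe_equivIco_mk_apply (p := (1 : ℝ)) x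
  rw [div_one, mul_one, Int.fract] at h
  rw [rep, h, ← mul_one (⌊x⌋ : ℝ), hg.sub_int_mul_eq]

theorem Function.Periodic.continuous_comp_rep (hg : Function.Periodic g 1) (hc : Continuous g) :
    Continuous fun x => g (rep x) :=
  AddCircle.liftIco_zero_continuous (by simpa using (hg 0).symm) hc.continuousOn

theorem continuous_torusMapOf (hg : Function.Periodic g 1) (hc : Continuous g) :
    Continuous (torusMapOf g) := by
  have h : Continuous fun z : Torus => ((g (rep z.1) : ℝ) : AddCircle (1 : ℝ)) :=
    (AddCircle.continuous_mk' 1).comp ((hg.continuous_comp_rep hc).comp continuous_fst)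
  exact ((continuous_fst.add continuous_snd).add h).prodMk (continuous_snd.add h)

theorem measurePreserving_torusMapOf (hg : Measurable g) :
    MeasurePreserving (torusMapOf g) volume volume := by
  have h : torusMapOf g = (fun z : Torus => (z.1 + z.2, z.2)) ∘
      fun z => (z.1, z.2 + ((g (rep z.1) : ℝ) : AddCircle (1 : ℝ))) :=
    funext fun z => Prod.ext (add_assoc _ _ _) rfl
  rw [h, Measure.volume_eq_prod]
  refine (measurePreserving_add_prod volume volume).comp <|
    (MeasurePreserving.id volume).skew_product
      (g := fun x y => y + ((g (rep x) : ℝ) : AddCircle (1 : ℝ))) ?_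
      (.of_forall fun _ => map_add_right_eq_self volume _)
  exact measurable_snd.add <|
    AddCircle.measurable_mk'.comp ((hg.comp measurable_rep).comp measurable_fst)

theorem semiconj_projTorus_liftMap (hg : Function.Periodic g 1) :
    Function.Semiconj projTorus (liftMap g) (torusMapOf g) := fun Z => by
  simp [projTorus, liftMap, torusMapOf, hg.apply_rep]

theorem liftMap_iterate_snd_sub (hg : Function.Periodic g 1) (n : ℕ) (Z : ℝ × ℝ) :
    ((liftMap g)^[n] Z).2 - Z.2 =
      birkhoffSum (torusMapOf g) (fun z => g (rep z.1)) n (projTorus Z) := by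
  induction n with
  | zero => simp
  | succ n ih =>
    rw [birkhoffSum_succ, ← ih, ← (semiconj_projTorus_liftMap hg).iterate_right,
      Function.iterate_succ_apply', liftMap]
    simp [projTorus, hg.apply_rep]
    ring

theorem vRotSet_liftMap (hg : Function.Periodic g 1) :
    vRotSet (liftMap g) = birkhoffLimitSet (torusMapOf g) (fun z => g (rep z.1)) := by
  ext ω
  simp only [vRotSet, birkhoffLimitSet, liftMap_iterate_snd_sub hg, Set.mem_ofPred_eq]
  constructor
  · rintro ⟨Z, n, hn, hω⟩
    exact ⟨fun i => projTorus (Z i), n, hn, hω⟩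
  · rintro ⟨x, n, hn, hω⟩
    exact ⟨fun i => (rep (x i).1, rep (x i).2), n, hn, by simpa only [projTorus_rep] using hω⟩

theorem integral_torus_comp_rep_fst (hg : Function.Periodic g 1) :
    ∫ z : Torus, g (rep z.1) = ∫ x in (0 : ℝ)..1, g x := by
  rw [Measure.volume_eq_prod, integral_fun_fst fun x => g (rep x), probReal_univ, one_smul,
    ← AddCircle.intervalIntegral_preimage 1 0, zero_add]
  simp only [hg.apply_rep]

end Periodic

/-- For T̂ ∈ D₀ the vertical rotation set is a nonempty compact interval
containing 0: ρ_V(T)* = [ρ_V^min, ρ_V^max] with ρ_V^min ≤ 0 ≤ ρ_V^max. -/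
theorem stmt2 (g : ℝ → ℝ) (hLip : ∃ K, LipschitzWith K g)
    (hper : ∀ x, g (x + 1) = g x) (hint : ∫ x in (0:ℝ)..1, g x = 0) :
    (vRotSet (liftMap g)).Nonempty ∧ IsCompact (vRotSet (liftMap g)) ∧
    vRotSet (liftMap g) = Set.Icc (rhoVMin (liftMap g)) (rhoVMax (liftMap g)) ∧
    rhoVMin (liftMap g) ≤ 0 ∧ 0 ≤ rhoVMax (liftMap g) := by
  obtain ⟨K, hK⟩ := hLip
  have hS := continuous_torusMapOf hper hK.continuous
  have hφ : Continuous fun z : Torus => g (rep z.1) :=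
    (Function.Periodic.continuous_comp_rep hper hK.continuous).comp continuous_fst
  have hzero : (0 : ℝ) ∈ vRotSet (liftMap g) := by
    rw [vRotSet_liftMap hper, ← hint, ← integral_torus_comp_rep_fst hper]
    exact integral_mem_birkhoffLimitSet hS hφ
      (measurePreserving_torusMapOf hK.continuous.measurable)
  obtain ⟨a, b, hab⟩ := vRotSet_liftMap hper ▸ exists_birkhoffLimitSet_eq_Icc hS hφ
  rw [hab] at hzero
  have hle : a ≤ b := hzero.1.trans hzero.2
  simp only [rhoVMin, rhoVMax, hab, csInf_Icc hle, csSup_Icc hle]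
  exact ⟨nonempty_Icc.2 hle, isCompact_Icc, trivial, hzero⟩

end
end

section
/- Let T̂ ∈ D₀ with lift T̃, let s∈ℤ and let q≥1 be an integer. Then for every x∈ℝ/ℤ one has T̂^q(x, μ⁻(x)) = (x, ν⁺(x)) and T̂^q(x, μ⁺(x)) = (x, ν⁻(x)). -/
open Filter Topology

noncomputable section

/-!
Fix `b = rep x` and let `x_j(y)` be the first coordinate of `T̃^j (b, y)`, so that
`x_{j+1} - 2 x_j + x_{j-1} = g (x_j)` and the second coordinate of `T̃^q (b, y)` is
`x_q(y) - x_{q-1}(y)`. The fibre of `K(s,q)` over `x` is `{y | x_q(y) = b + s}`, on which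
`p₂ ∘ T̃^q = b + s - x_{q-1}`; so it suffices that the lowest point `y₀` of the fibre minimises
`x_{q-1}` on the fibre (the highest point is handled by the reflection `g ↦ -g(-·)`).

Fix `y` in the fibre. For `t < y₀` the intermediate value theorem gives `x_q(t) < x_q(y)`.
The property `∀ j < q, x_j(t) ≤ x_j(y)` holds for `t` near `-∞` and is closed in `t`, and for
`t < y₀` it improves to strict inequalities: at a largest index `j ≥ 1` with `x_j(t) = x_j(y)`,
the recurrence would turn `x_{j+1}(t) < x_{j+1}(y)` into `x_{j-1}(t) > x_{j-1}(y)`.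
Continuous induction then carries the property from `-∞` up to `t = y₀`.
-/

open Set

section Orbit

variable {g : ℝ → ℝ} {G : ℝ}

def orbitX (g : ℝ → ℝ) (b : ℝ) (j : ℕ) (y : ℝ) : ℝ := ((liftMap g)^[j] (b, y)).1

lemma iterate_liftMap_snd_succ (b y : ℝ) (j : ℕ) :
    ((liftMap g)^[j + 1] (b, y)).2 = orbitX g b (j + 1) y - orbitX g b j y := by
  simp only [orbitX, Function.iterate_succ_apply', liftMap]
  ring

lemma orbitX_add_two (b y : ℝ) (j : ℕ) :
    orbitX g b (j + 2) y = 2 * orbitX g b (j + 1) y + g (orbitX g b (j + 1) y) - orbitX g b j y := by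
  simp only [orbitX, Function.iterate_succ_apply', liftMap]
  ring

lemma continuous_orbitX (hg : Continuous g) (b : ℝ) (j : ℕ) : Continuous (orbitX g b j) := by
  have hT : Continuous (liftMap g) := by unfold liftMap; fun_prop
  exact continuous_fst.comp ((hT.iterate j).comp (continuous_const.prodMk continuous_id))

lemma abs_iterate_liftMap_sub_le (hG : ∀ x, |g x| ≤ G) (b y : ℝ) (j : ℕ) :
    |((liftMap g)^[j] (b, y)).2 - y| ≤ j * G ∧ |orbitX g b j y - (b + j * y)| ≤ j ^ 2 * G := by
  have hG0 : 0 ≤ G := (abs_nonneg _).trans (hG 0)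
  induction j with
  | zero => simp [orbitX]
  | succ j ih =>
    obtain ⟨⟨hY₁, hY₂⟩, hX₁, hX₂⟩ := ih.imp abs_le.1 abs_le.1
    obtain ⟨hg₁, hg₂⟩ := abs_le.1 (hG (orbitX g b j y))
    have hjG : 0 ≤ (j : ℝ) * G := by positivity
    simp only [orbitX] at hX₁ hX₂ hg₁ hg₂ ⊢
    simp only [Function.iterate_succ_apply', liftMap, abs_le]
    push_cast
    refine ⟨⟨?_, ?_⟩, ⟨?_, ?_⟩⟩ <;> nlinarith

lemma tendsto_orbitX_atTop (hG : ∀ x, |g x| ≤ G) (b : ℝ) {j : ℕ} (hj : j ≠ 0) :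
    Tendsto (orbitX g b j) atTop atTop := by
  refine tendsto_atTop_mono (fun y => ?_) (tendsto_atTop_add_const_right _ (b - j ^ 2 * G)
    (tendsto_id.const_mul_atTop (Nat.cast_pos.2 (Nat.pos_of_ne_zero hj))))
  rw [id]
  linarith [(abs_le.1 (abs_iterate_liftMap_sub_le hG b y j).2).1]

lemma tendsto_orbitX_atBot (hG : ∀ x, |g x| ≤ G) (b : ℝ) {j : ℕ} (hj : j ≠ 0) :
    Tendsto (orbitX g b j) atBot atBot := by
  refine tendsto_atBot_mono (fun y => ?_) (tendsto_atBot_add_const_right _ (b + j ^ 2 * G)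
    (tendsto_id.const_mul_atBot (Nat.cast_pos.2 (Nat.pos_of_ne_zero hj))))
  rw [id]
  linarith [(abs_le.1 (abs_iterate_liftMap_sub_le hG b y j).2).2]

lemma orbitX_neg (b y : ℝ) (j : ℕ) :
    orbitX (fun t => -g (-t)) (-b) j (-y) = -orbitX g b j y := by
  have hneg : Function.Semiconj Neg.neg (liftMap g) (liftMap fun t => -g (-t)) := fun Z => by
    ext <;> simp only [liftMap, Prod.fst_neg, Prod.snd_neg, neg_neg] <;> ring
  simp only [orbitX, ← Prod.neg_mk, ← hneg.iterate_right j (b, y), Prod.fst_neg]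

end Orbit

section Comparison

variable {g : ℝ → ℝ} {G : ℝ}

lemma lt_of_le_of_lt_of_recurrence {u v : ℕ → ℝ}
    (hu : ∀ j, u (j + 2) = 2 * u (j + 1) + g (u (j + 1)) - u j)
    (hv : ∀ j, v (j + 2) = 2 * v (j + 1) + g (v (j + 1)) - v j)
    {n : ℕ} (hle : ∀ j ≤ n, u j ≤ v j) (hlt : u (n + 1) < v (n + 1)) {m : ℕ} (hm : m ≤ n) :
    u (m + 1) < v (m + 1) := by
  induction hm using Nat.decreasingInduction with
  | self => exact hlt
  | of_succ k hk ih =>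
    refine (hle (k + 1) hk).lt_of_ne fun heq => ?_
    have h := hu k
    rw [heq] at h
    linarith [hv k, hle k hk.le]

theorem orbitX_le_of_forall_lt (hg : Continuous g) (hG : ∀ x, |g x| ≤ G) {b y₀ y : ℝ} {n : ℕ}
    (hlt : ∀ t < y₀, orbitX g b (n + 1) t < orbitX g b (n + 1) y) :
    orbitX g b n y₀ ≤ orbitX g b n y := by
  set P : Set ℝ := {t | ∀ j ≤ n, orbitX g b j t ≤ orbitX g b j y}
  have hP : IsClosed P := by
    simp only [P, ofPred_forall]
    exact isClosed_iInter fun j => isClosed_iInter fun _ =>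
      isClosed_le (continuous_orbitX hg b j) continuous_const
  obtain ⟨L, hLP, hLy₀⟩ : ∃ L, L ∈ P ∧ L ≤ y₀ := by
    refine (((eventually_all_finite (finite_Iic n)).2 fun j _ => ?_).and
      (eventually_le_atBot y₀)).exists
    rcases j with _ | j
    · exact Eventually.of_forall fun t => le_rfl
    · exact (tendsto_orbitX_atBot hG b j.succ_ne_zero).eventually_le_atBot _
  have hstep : ∀ x ∈ P ∩ Ico L y₀, P ∈ 𝓝[>] x := by
    rintro x ⟨hxP, -, hxy₀⟩
    refine mem_nhdsWithin_of_mem_nhds ((eventually_all_finite (finite_Iic n)).2 fun j hj => ?_)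
    rcases j with _ | j
    · exact Eventually.of_forall fun t => le_rfl
    · have hx := lt_of_le_of_lt_of_recurrence (u := fun j => orbitX g b j x)
        (v := fun j => orbitX g b j y) (orbitX_add_two b x) (orbitX_add_two b y) hxP
        (hlt x hxy₀) (Nat.le_of_succ_le hj)
      exact ((continuous_orbitX hg b _).continuousAt.eventually_lt continuousAt_const hx).mono
        fun t => le_of_lt
  exact (hP.inter isClosed_Icc).Icc_subset_of_forall_mem_nhdsWithin hLP hstep ⟨hLy₀, le_rfl⟩ n le_rfl

theorem orbitX_le_of_forall_gt (hg : Continuous g) (hG : ∀ x, |g x| ≤ G) {b y₁ y : ℝ} {n : ℕ}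
    (hgt : ∀ t > y₁, orbitX g b (n + 1) y < orbitX g b (n + 1) t) :
    orbitX g b n y ≤ orbitX g b n y₁ := by
  have key := orbitX_le_of_forall_lt (g := fun t => -g (-t)) (b := -b) (y₀ := -y₁) (y := -y)
    (by fun_prop) (fun x => by simpa only [abs_neg] using hG (-x)) (n := n) fun t ht => by
      rw [← neg_neg t, orbitX_neg, orbitX_neg, neg_lt_neg_iff]
      exact hgt _ (lt_neg.1 ht)
  rwa [orbitX_neg, orbitX_neg, neg_le_neg_iff] at key

end Comparison

section Preimage

variable {f : ℝ → ℝ} (hf : Continuous f) (hbot : Tendsto f atBot atBot)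
  (htop : Tendsto f atTop atTop)
include hf hbot htop

theorem isLeast_preimage_csInf (a : ℝ) : IsLeast (f ⁻¹' {a}) (sInf (f ⁻¹' {a})) := by
  obtain ⟨L, hL⟩ := eventually_atBot.1 (hbot.eventually_lt_atBot a)
  exact (isClosed_singleton.preimage hf).isLeast_csInf (hf.surjective htop hbot a)
    ⟨L, fun z hz => le_of_not_ge fun hzL => (hL z hzL).ne hz⟩

theorem isGreatest_preimage_csSup (a : ℝ) : IsGreatest (f ⁻¹' {a}) (sSup (f ⁻¹' {a})) := by
  obtain ⟨M, hM⟩ := eventually_atTop.1 (htop.eventually_gt_atTop a)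
  exact (isClosed_singleton.preimage hf).isGreatest_csSup (hf.surjective htop hbot a)
    ⟨M, fun z hz => le_of_not_ge fun hMz => (hM z hMz).ne' hz⟩

omit htop in
theorem lt_of_lt_of_mem_lowerBounds_preimage {a y₀ t : ℝ} (hy₀ : y₀ ∈ lowerBounds (f ⁻¹' {a}))
    (ht : t < y₀) : f t < a := by
  by_contra! hat
  obtain ⟨w, hwa, hwt⟩ := ((hbot.eventually_le_atBot a).and (eventually_le_atBot t)).exists
  obtain ⟨z, hz, hfz⟩ := intermediate_value_Icc hwt hf.continuousOn ⟨hwa, hat⟩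
  linarith [hy₀ hfz, hz.2]

omit hbot in
theorem lt_of_mem_upperBounds_preimage_of_lt {a y₁ t : ℝ} (hy₁ : y₁ ∈ upperBounds (f ⁻¹' {a}))
    (ht : y₁ < t) : a < f t := by
  by_contra! hat
  obtain ⟨w, hwa, hwt⟩ := ((htop.eventually_ge_atTop a).and (eventually_ge_atTop t)).exists
  obtain ⟨z, hz, hfz⟩ := intermediate_value_Icc hwt hf.continuousOn ⟨hat, hwa⟩
  linarith [hy₁ hfz, hz.1]

end Preimage

section Fiber

variable {g : ℝ → ℝ} {G : ℝ} {b a : ℝ} {n : ℕ}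

lemma iterate_liftMap_snd_of_orbitX_eq {y : ℝ} (hy : orbitX g b (n + 1) y = a) :
    ((liftMap g)^[n + 1] (b, y)).2 = a - orbitX g b n y := by
  rw [iterate_liftMap_snd_succ, hy]

theorem isGreatest_image_iterate_snd (hg : Continuous g) (hG : ∀ x, |g x| ≤ G) {y₀ : ℝ}
    (hy₀ : IsLeast (orbitX g b (n + 1) ⁻¹' {a}) y₀) :
    IsGreatest ((fun y => ((liftMap g)^[n + 1] (b, y)).2) '' (orbitX g b (n + 1) ⁻¹' {a}))
      ((liftMap g)^[n + 1] (b, y₀)).2 := by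
  refine ⟨mem_image_of_mem _ hy₀.1, forall_mem_image.2 fun y hy => ?_⟩
  rw [iterate_liftMap_snd_of_orbitX_eq hy, iterate_liftMap_snd_of_orbitX_eq hy₀.1,
    sub_le_sub_iff_left]
  refine orbitX_le_of_forall_lt hg hG fun t ht => ?_
  rw [show orbitX g b (n + 1) y = a from hy]
  exact lt_of_lt_of_mem_lowerBounds_preimage (continuous_orbitX hg b _)
    (tendsto_orbitX_atBot hG b n.succ_ne_zero) hy₀.2 ht

theorem isLeast_image_iterate_snd (hg : Continuous g) (hG : ∀ x, |g x| ≤ G) {y₁ : ℝ}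
    (hy₁ : IsGreatest (orbitX g b (n + 1) ⁻¹' {a}) y₁) :
    IsLeast ((fun y => ((liftMap g)^[n + 1] (b, y)).2) '' (orbitX g b (n + 1) ⁻¹' {a}))
      ((liftMap g)^[n + 1] (b, y₁)).2 := by
  refine ⟨mem_image_of_mem _ hy₁.1, forall_mem_image.2 fun y hy => ?_⟩
  rw [iterate_liftMap_snd_of_orbitX_eq hy, iterate_liftMap_snd_of_orbitX_eq hy₁.1,
    sub_le_sub_iff_left]
  refine orbitX_le_of_forall_gt hg hG fun t ht => ?_
  rw [show orbitX g b (n + 1) y = a from hy]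
  exact lt_of_mem_upperBounds_preimage_of_lt (continuous_orbitX hg b _)
    (tendsto_orbitX_atTop hG b n.succ_ne_zero) hy₁.2 ht

end Fiber

section Cylinder

variable {g : ℝ → ℝ}

lemma coe_rep (x : AddCircle (1 : ℝ)) : ((rep x : ℝ) : AddCircle (1 : ℝ)) = x :=
  (AddCircle.equivIco 1 0).symm_apply_apply x

lemma apply_rep_coe (hper : Function.Periodic g 1) (t : ℝ) : g (rep t) = g t := by
  rw [← hper.lift_coe, coe_rep, hper.lift_coe]

lemma semiconj_projCyl_liftMap (hper : Function.Periodic g 1) :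
    Function.Semiconj projCyl (liftMap g) (inducedMap g) := fun Z => by
  simp only [projCyl, liftMap, inducedMap, apply_rep_coe hper, add_assoc, AddCircle.coe_add]

lemma iterate_liftMap_add_int (hper : Function.Periodic g 1) (k : ℤ) (j : ℕ) (Z : ℝ × ℝ) :
    (liftMap g)^[j] (Z + ((k : ℝ), 0)) = (liftMap g)^[j] Z + ((k : ℝ), 0) := by
  have hk : ∀ t, g (t + k) = g t := fun t => by simpa using hper.int_mul k t
  have h : Function.Semiconj (· + ((k : ℝ), (0 : ℝ))) (liftMap g) (liftMap g) := fun Z => by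
    ext
    · simp only [liftMap, Prod.fst_add, Prod.snd_add, hk, add_zero]
      ring
    · simp only [liftMap, Prod.fst_add, Prod.snd_add, hk, add_zero]
  exact (h.iterate_right j Z).symm

lemma mem_Kset_iff (hper : Function.Periodic g 1) {s : ℤ} {q : ℕ} {x : AddCircle (1 : ℝ)}
    {y : ℝ} : (x, y) ∈ Kset g s q ↔ orbitX g (rep x) q y = rep x + s := by
  refine ⟨?_, fun h => ⟨(rep x, y), h, by simp only [projCyl, coe_rep]⟩⟩
  rintro ⟨⟨t, y'⟩, hK, hproj⟩
  simp only [projCyl, Prod.mk.injEq] at hproj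
  obtain ⟨hx, rfl⟩ := hproj
  obtain ⟨k, hk⟩ := (AddCircle.coe_eq_zero_iff 1).1
    (show ((t - rep x : ℝ) : AddCircle (1 : ℝ)) = 0 by rw [AddCircle.coe_sub, hx, coe_rep, sub_self])
  obtain rfl : t = rep x + k := by simp only [zsmul_eq_mul, mul_one] at hk; linarith
  have hshift := congrArg Prod.fst (iterate_liftMap_add_int hper k q (rep x, y'))
  simp only [Prod.mk_add_mk, add_zero, Prod.fst_add] at hshift
  simp only [mem_ofPred_eq, hshift] at hK
  simp only [orbitX]
  linarith

lemma inducedMap_iterate_of_mem_Kset (hper : Function.Periodic g 1) {s : ℤ} {q : ℕ}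
    {x : AddCircle (1 : ℝ)} {y : ℝ} (h : (x, y) ∈ Kset g s q) :
    (inducedMap g)^[q] (x, y) = (x, ((liftMap g)^[q] (rep x, y)).2) := by
  have hx : projCyl (rep x, y) = (x, y) := by simp only [projCyl, coe_rep]
  rw [← hx, ← (semiconj_projCyl_liftMap hper).iterate_right q, projCyl,
    show ((liftMap g)^[q] (rep x, y)).1 = rep x + s from (mem_Kset_iff hper).1 h]
  simp [coe_rep]

lemma setOf_mem_image_Kset (hper : Function.Periodic g 1) (s : ℤ) (q : ℕ)
    (x : AddCircle (1 : ℝ)) :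
    {Y | (x, Y) ∈ (inducedMap g)^[q] '' Kset g s q}
      = (fun y => ((liftMap g)^[q] (rep x, y)).2) '' {y | (x, y) ∈ Kset g s q} := by
  ext Y
  constructor
  · rintro ⟨⟨x', y⟩, hK, hxY⟩
    rw [inducedMap_iterate_of_mem_Kset hper hK, Prod.mk.injEq] at hxY
    obtain ⟨rfl, rfl⟩ := hxY
    exact ⟨y, hK, rfl⟩
  · rintro ⟨y, hK, rfl⟩
    exact ⟨(x, y), hK, inducedMap_iterate_of_mem_Kset hper hK⟩

end Cylinder

theorem stmt10_general (g : ℝ → ℝ) (hLip : ∃ K, LipschitzWith K g)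
    (hper : ∀ x, g (x + 1) = g x)
    (s : ℤ) (q : ℕ) (hq : 1 ≤ q) :
    ∀ x : AddCircle (1:ℝ),
      (inducedMap g)^[q] (x, muMinus g s q x) = (x, nuPlus g s q x) ∧
      (inducedMap g)^[q] (x, muPlus g s q x) = (x, nuMinus g s q x) := by
  obtain ⟨K, hgK⟩ := hLip
  have hg := hgK.continuous
  obtain ⟨G, hG⟩ := isBounded_iff_forall_norm_le.1
    (Function.Periodic.isBounded_of_continuous hper one_ne_zero hg)
  replace hG : ∀ t, |g t| ≤ G := fun t => hG _ (mem_range_self t)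
  obtain ⟨n, rfl⟩ := Nat.exists_eq_add_of_le' hq
  intro x
  set S := orbitX g (rep x) (n + 1) ⁻¹' {rep x + s}
  have hKS : {y | (x, y) ∈ Kset g s (n + 1)} = S := Set.ext fun y => mem_Kset_iff hper
  have hX := continuous_orbitX hg (rep x) (n + 1)
  have hmin := isLeast_preimage_csInf hX (tendsto_orbitX_atBot hG _ n.succ_ne_zero)
    (tendsto_orbitX_atTop hG _ n.succ_ne_zero) (rep x + s)
  have hmax := isGreatest_preimage_csSup hX (tendsto_orbitX_atBot hG _ n.succ_ne_zero)
    (tendsto_orbitX_atTop hG _ n.succ_ne_zero) (rep x + s)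
  rw [muMinus, muPlus, nuMinus, nuPlus, setOf_mem_image_Kset hper, hKS,
    (isGreatest_image_iterate_snd hg hG hmin).csSup_eq,
    (isLeast_image_iterate_snd hg hG hmax).csInf_eq]
  exact ⟨inducedMap_iterate_of_mem_Kset hper ((mem_Kset_iff hper).2 hmin.1),
    inducedMap_iterate_of_mem_Kset hper ((mem_Kset_iff hper).2 hmax.1)⟩

/-- T̂^q(x, μ⁻(x)) = (x, ν⁺(x)) and T̂^q(x, μ⁺(x)) = (x, ν⁻(x)). -/
theorem stmt10 (g : ℝ → ℝ) (hLip : ∃ K, LipschitzWith K g)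
    (hper : ∀ x, g (x + 1) = g x) (hint : ∫ x in (0:ℝ)..1, g x = 0)
    (s : ℤ) (q : ℕ) (hq : 1 ≤ q) :
    ∀ x : AddCircle (1:ℝ),
      (inducedMap g)^[q] (x, muMinus g s q x) = (x, nuPlus g s q x) ∧
      (inducedMap g)^[q] (x, muPlus g s q x) = (x, nuMinus g s q x) :=
  stmt10_general g hLip hper s q hq

end
end

section
/- Let g̃:ℝ→ℝ be continuous, not identically zero, with g̃(x+1)=g̃(x) for all x and ∫₀¹ g̃(x)dx=0, and let x₀ be a point where g̃ attains its maximum (so g̃(x₀)>0). Then for every λ ≥ λ* := 1/g̃(x₀), the cylinder map Ŝ_λ has no rotational invariant curve. -/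
open Filter Topology

noncomputable section

/-!
Mean zero forces `g̃` to change sign, so for `λ ≥ 1/g̃(x₀)` there is `x₁` with `λ g̃(x₁) = 1`.
The lift then sends `(x₁ + j, m)` to `(x₁ + j + m + 1, m + 1)` for integers `j, m`: this orbit
climbs one unit per step. Take a vertical segment far below an invariant curve, ending at
`(x₁, -N)`. After `2N` steps its top end lies above the curve, and its bottom end is still below
it, since no orbit rises faster than `max λ g̃` per step. The image path therefore meets the lifted
curve, and by invariance and injectivity the segment itself meets the curve, which is absurd.

That a path `δ` from above a lifted degree-one curve `c` to below it must meet it is a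
Poincaré–Miranda argument: otherwise `(s, t) ↦ c t - δ s` has a continuous argument on the simply
connected space `I × ℝ`, and on a large enough rectangle this argument would increase along each
of the four sides.
-/

open Function Set Real unitInterval

theorem lt_of_forall_sin_pos_of_cos_pos_of_cos_neg {X : Type*} [TopologicalSpace X]
    [PreconnectedSpace X] {θ : X → ℝ} (hθ : Continuous θ) (hsin : ∀ x, 0 < sin (θ x)) {a b : X}
    (ha : 0 < cos (θ a)) (hb : cos (θ b) < 0) : θ a < θ b := by
  -- shift by a multiple of `2π` so that `θ a` lands in `[-π, π)`
  set n := toIcoDiv two_pi_pos (-π) (θ a)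
  set φ : X → ℝ := fun x ↦ θ x - n * (2 * π)
  have hφ : φ a ∈ Ico (-π) (-π + 2 * π) := by
    have := toIcoMod_mem_Ico two_pi_pos (-π) (θ a)
    rwa [← self_sub_toIcoDiv_zsmul, zsmul_eq_mul] at this
  have hsinφ (x : X) : 0 < sin (φ x) := by simpa [φ] using hsin x
  have hcosφ (x : X) : cos (φ x) = cos (θ x) := cos_sub_int_mul_two_pi _ _
  have ha_pos : 0 < φ a := by
    by_contra! h
    exact (hsinφ a).not_ge (sin_nonpos_of_nonpos_of_neg_pi_le h hφ.1)
  have ha_lt : φ a < π / 2 := by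
    by_contra! h
    exact ha.not_ge (hcosφ a ▸ cos_nonpos_of_pi_div_two_le_of_le h (by linarith [hφ.2]))
  have hb_pos : 0 < φ b := by
    by_contra! h
    obtain ⟨z, hz⟩ := intermediate_value_univ b a (hθ.sub continuous_const) ⟨h, ha_pos.le⟩
    simpa [show φ z = 0 from hz] using hsinφ z
  by_contra! h
  exact hb.not_ge (hcosφ b ▸ cos_nonneg_of_neg_pi_div_two_le_of_le (by linarith) (by linarith))

theorem Complex.exists_continuous_exp_comp_eq {Z : Type*} [TopologicalSpace Z]
    [SimplyConnectedSpace Z] [LocallyPathConnectedSpace Z] {F : Z → ℂ} (hF : Continuous F)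
    (h₀ : ∀ z, F z ≠ 0) : ∃ L : Z → ℂ, Continuous L ∧ ∀ z, exp (L z) = F z := by
  obtain ⟨z₀⟩ : Nonempty Z := inferInstance
  obtain ⟨L, ⟨-, hL⟩, -⟩ := isCoveringMapOn_exp.existsUnique_continuousMap_lifts ⟨F, hF⟩
    (exp_log (h₀ z₀)) h₀
  exact ⟨L, L.continuous, congrFun hL⟩

theorem exists_eq_zero_of_signs_on_sides {X Y : Type*} [TopologicalSpace X] [TopologicalSpace Y]
    [ContractibleSpace X] [ContractibleSpace Y] [LocallyPathConnectedSpace X]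
    [LocallyPathConnectedSpace Y] {F : X × Y → ℝ × ℝ} (hF : Continuous F) {x₀ x₁ : X} {y₀ y₁ : Y}
    (hx₀ : ∀ y, (F (x₀, y)).2 < 0) (hx₁ : ∀ y, 0 < (F (x₁, y)).2)
    (hy₀ : ∀ x, (F (x, y₀)).1 < 0) (hy₁ : ∀ x, 0 < (F (x, y₁)).1) : ∃ p, F p = 0 := by
  by_contra! hF₀
  obtain ⟨L, hLc, hL⟩ := Complex.exists_continuous_exp_comp_eq
    (Complex.equivRealProdCLM.symm.continuous.comp hF) (by simpa using hF₀)
  set Θ : X × Y → ℝ := fun p ↦ (L p).im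
  have hre (p : X × Y) : (F p).1 = Real.exp (L p).re * cos (Θ p) := by
    rw [← Complex.exp_re, hL]; rfl
  have him (p : X × Y) : (F p).2 = Real.exp (L p).re * sin (Θ p) := by
    rw [← Complex.exp_im, hL]; rfl
  have cos_pos {p} (h : 0 < (F p).1) : 0 < cos (Θ p) :=
    pos_of_mul_pos_right (hre p ▸ h) (Real.exp_pos _).le
  have cos_neg {p} (h : (F p).1 < 0) : cos (Θ p) < 0 :=
    neg_of_mul_neg_right (hre p ▸ h) (Real.exp_pos _).le
  have sin_pos {p} (h : 0 < (F p).2) : 0 < sin (Θ p) :=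
    pos_of_mul_pos_right (him p ▸ h) (Real.exp_pos _).le
  have sin_neg {p} (h : (F p).2 < 0) : sin (Θ p) < 0 :=
    neg_of_mul_neg_right (him p ▸ h) (Real.exp_pos _).le
  -- going round the square, `F` stays in one half-plane on each side and passes from one
  -- quadrant to the next, so its argument `Θ` increases four times
  have side_x₀ : Θ (x₀, y₀) < Θ (x₀, y₁) := by
    simpa using lt_of_forall_sin_pos_of_cos_pos_of_cos_neg (θ := fun y ↦ Θ (x₀, y) + π)
      (by fun_prop) (fun y ↦ by simpa using sin_neg (hx₀ y))
      (by simpa using cos_neg (hy₀ x₀)) (by simpa using cos_pos (hy₁ x₀))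
  have side_y₁ : Θ (x₀, y₁) < Θ (x₁, y₁) := by
    simpa using lt_of_forall_sin_pos_of_cos_pos_of_cos_neg (θ := fun x ↦ Θ (x, y₁) + π / 2)
      (by fun_prop) (fun x ↦ by simpa [sin_add_pi_div_two] using cos_pos (hy₁ x))
      (a := x₀) (by simpa [cos_add_pi_div_two] using sin_neg (hx₀ y₁))
      (b := x₁) (by simpa [cos_add_pi_div_two] using sin_pos (hx₁ y₁))
  have side_x₁ : Θ (x₁, y₁) < Θ (x₁, y₀) :=
    lt_of_forall_sin_pos_of_cos_pos_of_cos_neg (θ := fun y ↦ Θ (x₁, y))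
      (by fun_prop) (fun y ↦ sin_pos (hx₁ y)) (cos_pos (hy₁ x₁)) (cos_neg (hy₀ x₁))
  have side_y₀ : Θ (x₁, y₀) < Θ (x₀, y₀) := by
    simpa using lt_of_forall_sin_pos_of_cos_pos_of_cos_neg (θ := fun x ↦ Θ (x, y₀) - π / 2)
      (by fun_prop) (fun x ↦ by simpa [sin_sub_pi_div_two] using cos_neg (hy₀ x))
      (a := x₁) (by simpa [cos_sub_pi_div_two] using sin_pos (hx₁ y₀))
      (b := x₀) (by simpa [cos_sub_pi_div_two] using sin_neg (hx₀ y₀))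
  linarith

theorem exists_eq_of_path_crosses_curve {c : ℝ → ℝ × ℝ} (hc : Continuous c)
    (hbot : Tendsto (fun t ↦ (c t).1) atBot atBot) (htop : Tendsto (fun t ↦ (c t).1) atTop atTop)
    (δ : C(I, ℝ × ℝ)) (h₀ : ∀ t, (c t).2 < (δ 0).2) (h₁ : ∀ t, (δ 1).2 < (c t).2) :
    ∃ s t, δ s = c t := by
  have : ContractibleSpace I := (convex_Icc (0 : ℝ) 1).contractibleSpace (nonempty_Icc.2 zero_le_one)
  have : LocallyPathConnectedSpace I := (convex_Icc (0 : ℝ) 1).locallyPathConnectedSpace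
  have hδc : IsCompact (range fun s ↦ (δ s).1) := isCompact_range (by fun_prop)
  obtain ⟨m, hm⟩ := hδc.bddBelow
  obtain ⟨M, hM⟩ := hδc.bddAbove
  obtain ⟨t₀, ht₀⟩ := (hbot.eventually_lt_atBot m).exists
  obtain ⟨t₁, ht₁⟩ := (htop.eventually_gt_atTop M).exists
  obtain ⟨⟨s, t⟩, hst⟩ := exists_eq_zero_of_signs_on_sides (F := fun p ↦ c p.2 - δ p.1)
    (by fun_prop) (x₀ := 0) (x₁ := 1) (y₀ := t₀) (y₁ := t₁)
    (fun t ↦ by simpa using h₀ t) (fun t ↦ by simpa using h₁ t)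
    (fun s ↦ by simpa using ht₀.trans_le (hm (mem_range_self s)))
    (fun s ↦ by simpa using (hM (mem_range_self s)).trans_lt ht₁)
  exact ⟨s, t, (sub_eq_zero.1 hst).symm⟩

theorem Function.Periodic.exists_abs_le {f : ℝ → ℝ} {T : ℝ} (hf : Continuous f)
    (hper : Periodic f T) (hT : T ≠ 0) : ∃ B, ∀ x, |f x| ≤ B := by
  obtain ⟨B, hB⟩ := (hper.isBounded_of_continuous hT hf).exists_norm_le
  exact ⟨B, fun x ↦ hB _ (mem_range_self x)⟩

theorem Function.Periodic.exists_neg_of_intervalIntegral_eq_zero {f : ℝ → ℝ} {T : ℝ}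
    (hf : Continuous f) (hper : Periodic f T) (hT : 0 < T) (hint : ∫ x in (0 : ℝ)..T, f x = 0)
    (hnz : ∃ x, f x ≠ 0) : ∃ x, f x < 0 := by
  by_contra! hnonneg
  obtain ⟨x, hx⟩ := hnz
  -- over the period centred at `x`, `f` is positive on an open neighbourhood of `x`
  have hpos : 0 < ∫ y in (x - T / 2)..(x - T / 2 + T), f y := by
    rw [intervalIntegral.integral_pos_iff_support_of_nonneg_ae (MeasureTheory.ae_of_all _ hnonneg)
      (hf.intervalIntegrable _ _)]
    have hxI : x ∈ Ioo (x - T / 2) (x - T / 2 + T) := ⟨by linarith, by linarith⟩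
    refine ⟨by linarith, ((hf.isOpen_support.inter isOpen_Ioo).measure_pos _ ⟨x, hx, hxI⟩).trans_le
      (MeasureTheory.measure_mono (inter_subset_inter_right _ Ioo_subset_Ioc_self))⟩
  rw [hper.intervalIntegral_add_eq _ 0, zero_add, hint] at hpos
  exact hpos.false

theorem exists_mul_eq_one_of_one_div_le {g : ℝ → ℝ} (hcont : Continuous g) (hper : Periodic g 1)
    (hint : ∫ x in (0 : ℝ)..1, g x = 0) (hnz : ∃ x, g x ≠ 0) {x₀ : ℝ} (hmax : ∀ x, g x ≤ g x₀)
    {lam : ℝ} (hlam : 1 / g x₀ ≤ lam) : ∃ x₁, lam * g x₁ = 1 := by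
  obtain ⟨xn, hxn⟩ := hper.exists_neg_of_intervalIntegral_eq_zero hcont one_pos hint hnz
  have hper' : Periodic (-g) 1 := fun x ↦ congrArg Neg.neg (hper x)
  obtain ⟨xp, hxp⟩ := hper'.exists_neg_of_intervalIntegral_eq_zero hcont.neg one_pos
    (by simp [intervalIntegral.integral_neg, hint]) (by simpa using hnz)
  have hgx₀ : 0 < g x₀ := by linarith [hmax xp, show 0 < g xp by simpa using hxp]
  have hlam₀ : 0 < lam := (one_div_pos.2 hgx₀).trans_le hlam
  exact intermediate_value_univ (f := fun x ↦ lam * g x) xn x₀ (by fun_prop)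
    (show (1 : ℝ) ∈ Icc _ _ from ⟨by nlinarith, (div_le_iff₀ hgx₀).1 hlam⟩)

theorem Function.Periodic.apply_rep_s14 {G : ℝ → ℝ} (hG : Periodic G 1) (x : ℝ) :
    G (rep x) = G x := by
  rw [← hG.lift_coe, ← hG.lift_coe x]
  exact congrArg hG.lift AddCircle.coe_equivIco

theorem semiconj_projCyl_liftMap_s14 {G : ℝ → ℝ} (hG : Periodic G 1) :
    Semiconj projCyl (liftMap G) (inducedMap G) := fun Z ↦ by
  simp only [projCyl, liftMap, inducedMap, hG.apply_rep_s14, AddCircle.coe_add, add_assoc]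

theorem inducedMap_injective (G : ℝ → ℝ) : Injective (inducedMap G) := by
  rintro ⟨x, y⟩ ⟨x', y'⟩ h
  simp only [inducedMap, Prod.mk.injEq] at h
  obtain ⟨h₁, h₂⟩ := h
  rw [h₂, add_left_inj] at h₁
  subst h₁
  simp_all

theorem liftMap_continuous {G : ℝ → ℝ} (hG : Continuous G) : Continuous (liftMap G) := by
  unfold liftMap; fun_prop

theorem liftMap_iterate_snd_le {G : ℝ → ℝ} {K : ℝ} (hK : ∀ x, G x ≤ K) (n : ℕ) (Z : ℝ × ℝ) :
    ((liftMap G)^[n] Z).2 ≤ Z.2 + n * K := by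
  induction n with
  | zero => simp
  | succ n ih =>
    rw [iterate_succ_apply']
    push_cast
    linarith [hK ((liftMap G)^[n] Z).1, show (liftMap G ((liftMap G)^[n] Z)).2 =
      ((liftMap G)^[n] Z).2 + G ((liftMap G)^[n] Z).1 from rfl]

theorem liftMap_iterate_of_eq_one {G : ℝ → ℝ} (hG : Periodic G 1) {x : ℝ} (hx : G x = 1)
    (m : ℤ) (n : ℕ) : ∃ j : ℤ, (liftMap G)^[n] (x, (m : ℝ)) = (x + j, (m : ℝ) + n) := by
  induction n with
  | zero => exact ⟨0, by simp⟩
  | succ n ih =>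
    obtain ⟨j, hj⟩ := ih
    refine ⟨j + m + n + 1, ?_⟩
    have hxj : G (x + j) = 1 := by simpa [hx] using hG.int_mul j x
    rw [iterate_succ_apply', hj, liftMap]
    ext <;> simp only [hxj] <;> push_cast <;> ring

theorem exists_segment_liftMap_iterate_crosses {G : ℝ → ℝ} (hG : Periodic G 1) {x₁ : ℝ}
    (hx₁ : G x₁ = 1) {K : ℝ} (hK : ∀ x, G x ≤ K) (N : ℕ) :
    ∃ v : C(I, ℝ × ℝ), (∀ s, (v s).2 ≤ -N) ∧ ((liftMap G)^[2 * N] (v 0)).2 = N ∧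
      ((liftMap G)^[2 * N] (v 1)).2 ≤ -N := by
  have hK₀ : 0 ≤ K := zero_le_one.trans (hx₁ ▸ hK x₁)
  refine ⟨⟨fun s ↦ (x₁, -N - s * (2 * N * K)), by fun_prop⟩, fun s ↦ ?_, ?_, ?_⟩
  · have : 0 ≤ (s : ℝ) * (2 * N * K) := mul_nonneg s.2.1 (by positivity)
    simp only [ContinuousMap.coe_mk]
    linarith
  · obtain ⟨j, hj⟩ := liftMap_iterate_of_eq_one hG hx₁ (-N) (2 * N)
    simp only [ContinuousMap.coe_mk, Icc.coe_zero, zero_mul, sub_zero]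
    rw [show (-N : ℝ) = ((-N : ℤ) : ℝ) by push_cast; rfl, hj]
    push_cast; ring
  · have := liftMap_iterate_snd_le hK (2 * N) (x₁, -N - 1 * (2 * N * K))
    simp only [ContinuousMap.coe_mk, Icc.coe_one]
    push_cast at this
    linarith

theorem IsRIC.exists_lift {S : Cyl → Cyl} {Γ : Set Cyl} (h : IsRIC S Γ) :
    ∃ c : ℝ → ℝ × ℝ, Continuous c ∧ Tendsto (fun t ↦ (c t).1) atBot atBot ∧
      Tendsto (fun t ↦ (c t).1) atTop atTop ∧ (∀ t, projCyl (c t) ∈ Γ) ∧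
      ∃ B, ∀ z ∈ Γ, |z.2| ≤ B := by
  obtain ⟨γ, -, -, ⟨c, hc, hc₁, hγc⟩, rfl, -⟩ := h
  have hper₁ : Periodic (fun t ↦ (c t).1 - t) 1 := fun t ↦ by simp [hc₁]
  have hper₂ : Periodic (fun t ↦ (c t).2) 1 := fun t ↦ by simp [hc₁]
  obtain ⟨C, hC⟩ := hper₁.exists_abs_le (by fun_prop) one_ne_zero
  obtain ⟨B, hB⟩ := hper₂.exists_abs_le (by fun_prop) one_ne_zero
  have hc_eq : (fun t ↦ (c t).1) = fun t ↦ t + ((c t).1 - t) := by simp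
  refine ⟨c, hc, ?_, ?_, fun t ↦ hγc t ▸ mem_range_self _, B, ?_⟩
  · rw [hc_eq]
    exact tendsto_atBot_add_right_of_ge _ C tendsto_id fun t ↦ (le_abs_self _).trans (hC t)
  · rw [hc_eq]
    exact tendsto_atTop_add_right_of_le _ (-C) tendsto_id fun t ↦ neg_le_of_abs_le (hC t)
  · rintro _ ⟨ζ, rfl⟩
    obtain ⟨τ, rfl⟩ := QuotientAddGroup.mk_surjective ζ
    exact hγc τ ▸ hB τ

theorem IsRIC.image_eq {S : Cyl → Cyl} {Γ : Set Cyl} (h : IsRIC S Γ) : S '' Γ = Γ := by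
  obtain ⟨-, -, -, -, -, hSΓ⟩ := h
  exact hSΓ

theorem mem_of_projCyl_liftMap_iterate_mem {G : ℝ → ℝ} (hG : Periodic G 1) {Γ : Set Cyl}
    (hΓ : inducedMap G '' Γ = Γ) {n : ℕ} {Z : ℝ × ℝ} (hZ : projCyl ((liftMap G)^[n] Z) ∈ Γ) :
    projCyl Z ∈ Γ := by
  have hpre : inducedMap G ⁻¹' Γ = Γ := by
    conv_lhs => rw [← hΓ]
    exact (inducedMap_injective G).preimage_image Γ
  rw [(semiconj_projCyl_liftMap_s14 hG).iterate_right] at hZ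
  exact (IsFixedPt.preimage_iterate hpre n).eq ▸ hZ

theorem not_isRIC_inducedMap_of_eq_one {G : ℝ → ℝ} (hGc : Continuous G) (hG : Periodic G 1)
    {x₁ : ℝ} (hx₁ : G x₁ = 1) (Γ : Set Cyl) : ¬IsRIC (inducedMap G) Γ := by
  intro hΓ
  obtain ⟨c, hc, hbot, htop, hcΓ, B, hB⟩ := hΓ.exists_lift
  obtain ⟨K, hK⟩ := hG.exists_abs_le hGc one_ne_zero
  obtain ⟨N, hN⟩ := exists_nat_gt B
  obtain ⟨v, hv, hv₀, hv₁⟩ :=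
    exists_segment_liftMap_iterate_crosses hG hx₁ (fun x ↦ (le_abs_self _).trans (hK x)) N
  have hcB (t : ℝ) : |(c t).2| ≤ B := hB _ (hcΓ t)
  let δ : C(I, ℝ × ℝ) := .comp ⟨_, (liftMap_continuous hGc).iterate (2 * N)⟩ v
  have hδ (s : I) : δ s = (liftMap G)^[2 * N] (v s) := rfl
  obtain ⟨s, t, hst⟩ := exists_eq_of_path_crosses_curve hc hbot htop δ
    (fun t ↦ by rw [hδ, hv₀]; linarith [(abs_le.1 (hcB t)).2])
    (fun t ↦ by rw [hδ]; linarith [(abs_le.1 (hcB t)).1])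
  have hvΓ : |(v s).2| ≤ B :=
    hB _ (mem_of_projCyl_liftMap_iterate_mem hG hΓ.image_eq (hδ s ▸ hst ▸ hcΓ t))
  linarith [(abs_le.1 hvΓ).1, hv s]

/-- if x₀ is a maximum point of g̃ (not identically zero), then for every
λ ≥ 1/g̃(x₀) the map Ŝ_λ has no rotational invariant curve. -/
theorem stmt14 (g : ℝ → ℝ) (hcont : Continuous g) (hnz : ∃ x, g x ≠ 0)
    (hper : ∀ x, g (x + 1) = g x) (hint : ∫ x in (0:ℝ)..1, g x = 0)
    (x₀ : ℝ) (hmax : ∀ x, g x ≤ g x₀) :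
    ∀ lam : ℝ, 1 / g x₀ ≤ lam →
      ¬∃ Γ : Set Cyl, IsRIC (inducedMap (fun x => lam * g x)) Γ := by
  rintro lam hlam ⟨Γ, hΓ⟩
  obtain ⟨x₁, hx₁⟩ := exists_mul_eq_one_of_one_div_le hcont hper hint hnz hmax hlam
  exact not_isRIC_inducedMap_of_eq_one (G := fun x ↦ lam * g x) (by fun_prop)
    (fun x ↦ by simp [hper x]) hx₁ Γ hΓ

end
end
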